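/- arXiv:1707.04347 — 6 statements merged into one kernel-verified Lean document; each statement's English description precedes it below -/
import Mathlib

section
/- Let A and B be two bases of a matroid M = (N, I) on a finite ground set N. Then there exists a bijection g from A \ B to B \ A such that for every element u ∈ A \ B, the set (B ∪ {u}) \ {g(u)} is independent in M. -/
/-- Augmentation: an independent set can be extended from a larger independent set. -/
theorem matroid_augment_aux {α : Type*} [DecidableEq α]
    (Indep : Finset α → Prop)
    (h_exch : ∀ A B : Finset α, Indep A → Indep B → A.card < B.card →
      ∃ u ∈ B \ A, Indep (insert u A)) :
    ∀ n (I J : Finset α), J.card - I.card = n → Indep I → Indep J → I.card ≤ J.card →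
      ∃ K, Indep K ∧ I ⊆ K ∧ K ⊆ I ∪ J ∧ K.card = J.card := by
  intro n
  induction n with
  | zero =>
    intro I J hn hI hJ hle
    exact ⟨I, hI, subset_rfl, Finset.subset_union_left,
      le_antisymm hle (Nat.sub_eq_zero_iff_le.mp hn)⟩
  | succ n ih =>
    intro I J hn hI hJ hle
    have hlt : I.card < J.card := by omega
    obtain ⟨u, hu, hIu⟩ := h_exch I J hI hJ hlt
    have huI : u ∉ I := (Finset.mem_sdiff.mp hu).2
    have huJ : u ∈ J := (Finset.mem_sdiff.mp hu).1
    have hcard : (insert u I).card = I.card + 1 := Finset.card_insert_of_notMem huI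
    obtain ⟨K, hK, hIK, hKJ, hKc⟩ := ih (insert u I) J (by omega) hIu hJ (by omega)
    refine ⟨K, hK, (Finset.subset_insert _ _).trans hIK, ?_, hKc⟩
    intro x hx
    rcases Finset.mem_union.mp (hKJ hx) with h | h
    · rcases Finset.mem_insert.mp h with rfl | h
      · exact Finset.mem_union_right _ huJ
      · exact Finset.mem_union_left _ h
    · exact Finset.mem_union_right _ h

/-- If `A` and `B` are two bases of a matroid on a finite ground set,
then there exists a bijection `g : A \ B → B \ A` such that for every `u ∈ A \ B`,
the set `(B ∪ {u}) \ {g u}` is independent. -/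
theorem exists_bijection_of_bases {α : Type*} [DecidableEq α] [Fintype α]
    (Indep : Finset α → Prop)
    (h_nonempty : ∃ A, Indep A)
    (h_down : ∀ A B : Finset α, A ⊆ B → Indep B → Indep A)
    (h_exch : ∀ A B : Finset α, Indep A → Indep B → A.card < B.card →
      ∃ u ∈ B \ A, Indep (insert u A))
    (A B : Finset α)
    (hA : Indep A ∧ ∀ C, Indep C → A ⊆ C → C = A)
    (hB : Indep B ∧ ∀ C, Indep C → B ⊆ C → C = B) :
    ∃ g : ↥(A \ B) → ↥(B \ A), Function.Bijective g ∧
      ∀ u : ↥(A \ B), Indep ((insert (u : α) B).erase ((g u : α))) := by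
  classical
  obtain ⟨hAi, hAmax⟩ := hA
  obtain ⟨hBi, hBmax⟩ := hB
  -- All bases have the same cardinality.
  have hcard : A.card = B.card := by
    by_contra hne
    rcases Nat.lt_or_ge A.card B.card with h | h
    · obtain ⟨u, hu, hind⟩ := h_exch A B hAi hBi h
      have := hAmax _ hind (Finset.subset_insert _ _)
      exact (Finset.mem_sdiff.mp hu).2 (this ▸ Finset.mem_insert_self u A)
    · have h' : B.card < A.card := lt_of_le_of_ne h (fun e => hne e.symm)
      obtain ⟨u, hu, hind⟩ := h_exch B A hBi hAi h'
      have := hBmax _ hind (Finset.subset_insert _ _)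
      exact (Finset.mem_sdiff.mp hu).2 (this ▸ Finset.mem_insert_self u B)
  have hsd : (A \ B).card = (B \ A).card := by
    have h1 := Finset.card_sdiff_add_card_inter A B
    have h2 := Finset.card_sdiff_add_card_inter B A
    rw [Finset.inter_comm B A] at h2
    omega
  -- The bipartite "valid exchange" relation.
  set t : ↥(A \ B) → Finset α :=
    fun u => (B \ A).filter (fun v => Indep ((insert (u : α) B).erase v)) with ht
  -- Hall's condition.
  have hall : ∀ s : Finset ↥(A \ B), s.card ≤ (s.biUnion t).card := by
    intro s
    by_contra hcon
    push_neg at hcon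
    set V : Finset α := s.biUnion t with hV
    set S : Finset α := s.image Subtype.val with hS
    have hScard : S.card = s.card := Finset.card_image_of_injective _ Subtype.val_injective
    have hSsub : S ⊆ A \ B := by
      intro x hx
      obtain ⟨y, _, rfl⟩ := Finset.mem_image.mp hx
      exact y.2
    have hVsub : V ⊆ B \ A := by
      intro x hx
      obtain ⟨y, _, hy⟩ := Finset.mem_biUnion.mp hx
      exact (Finset.mem_filter.mp hy).1
    -- C ⊆ A and D ⊆ B, both independent.
    set C : Finset α := (B ∩ A) ∪ S with hC
    set D : Finset α := (B ∩ A) ∪ V with hD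
    have hCA : C ⊆ A := by
      intro x hx
      rcases Finset.mem_union.mp hx with h | h
      · exact (Finset.mem_inter.mp h).2
      · exact (Finset.mem_sdiff.mp (hSsub h)).1
    have hDB : D ⊆ B := by
      intro x hx
      rcases Finset.mem_union.mp hx with h | h
      · exact (Finset.mem_inter.mp h).1
      · exact (Finset.mem_sdiff.mp (hVsub h)).1
    have hCi : Indep C := h_down _ _ hCA hAi
    have hDi : Indep D := h_down _ _ hDB hBi
    have hCcard : C.card = (B ∩ A).card + S.card := by
      rw [Finset.card_union_of_disjoint]
      exact Finset.disjoint_left.mpr fun x hx hx' =>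
        (Finset.mem_sdiff.mp (hSsub hx')).2 (Finset.mem_inter.mp hx).1
    have hDcard : D.card = (B ∩ A).card + V.card := by
      rw [Finset.card_union_of_disjoint]
      exact Finset.disjoint_left.mpr fun x hx hx' =>
        (Finset.mem_sdiff.mp (hVsub hx')).2 (Finset.mem_inter.mp hx).2
    have hDC : D.card < C.card := by omega
    -- Augment D from C; get an element u of S that can be added to D.
    obtain ⟨K, hKi, hDK, hKDC, hKc⟩ :=
      matroid_augment_aux Indep h_exch _ D C rfl hDi hCi hDC.le
    have hDKss : D ⊂ K := hDK.ssubset_of_ne (fun h => by rw [h] at hDC; omega)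
    obtain ⟨u, huK, huD⟩ := Finset.exists_of_ssubset hDKss
    have huS : u ∈ S := by
      rcases Finset.mem_union.mp (hKDC huK) with h | h
      · exact absurd h huD
      · rcases Finset.mem_union.mp h with h | h
        · exact absurd (Finset.mem_union_left V h) huD
        · exact h
    have huAB : u ∈ A \ B := hSsub huS
    have huB : u ∉ B := (Finset.mem_sdiff.mp huAB).2
    -- X = D ∪ {u} is independent and strictly smaller than B.
    have hXi : Indep (insert u D) := h_down _ _ (Finset.insert_subset huK hDK) hKi
    have hXB : insert u D ⊆ insert u B := Finset.insert_subset_insert _ hDB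
    have hVlt : V.card < (B \ A).card := by
      have : s.card ≤ (A \ B).card := by
        calc s.card = S.card := hScard.symm
        _ ≤ (A \ B).card := Finset.card_le_card hSsub
      omega
    have huDmem : u ∉ D := huD
    have hXcard : (insert u D).card = D.card + 1 := Finset.card_insert_of_notMem huDmem
    have hBAstrict : (B ∩ A).card + (B \ A).card = B.card := by
      have := Finset.card_sdiff_add_card_inter B A
      omega
    have hDltB : D.card < B.card := by
      rw [hDcard, ← hBAstrict]
      exact Nat.add_lt_add_left hVlt _
    have hXleB : (insert u D).card ≤ B.card := by rw [hXcard]; omega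
    -- Augment X from B to a set Y of size |B| inside insert u B.
    obtain ⟨Y, hYi, hXY, hYsub, hYc⟩ :=
      matroid_augment_aux Indep h_exch _ (insert u D) B rfl hXi hBi hXleB
    have hYsub' : Y ⊆ insert u B := by
      intro x hx
      rcases Finset.mem_union.mp (hYsub hx) with h | h
      · exact hXB h
      · exact Finset.mem_insert_of_mem h
    have huY : u ∈ Y := hXY (Finset.mem_insert_self _ _)
    have hiuB : (insert u B).card = B.card + 1 := Finset.card_insert_of_notMem huB
    -- The unique element v missing from Y.
    have hmiss : ((insert u B) \ Y).card = 1 := by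
      rw [Finset.card_sdiff_of_subset hYsub']
      omega
    obtain ⟨v, hv⟩ := Finset.card_eq_one.mp hmiss
    have hvmem : v ∈ insert u B ∧ v ∉ Y := by
      have : v ∈ (insert u B) \ Y := hv ▸ Finset.mem_singleton_self v
      exact ⟨(Finset.mem_sdiff.mp this).1, (Finset.mem_sdiff.mp this).2⟩
    have hvu : v ≠ u := fun h => hvmem.2 (h ▸ huY)
    have hvB : v ∈ B := (Finset.mem_insert.mp hvmem.1).resolve_left hvu
    have hvD : v ∉ D := fun h => hvmem.2 (hXY (Finset.mem_insert_of_mem h))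
    have hvA : v ∉ A := fun h => hvD (Finset.mem_union_left _ (Finset.mem_inter.mpr ⟨hvB, h⟩))
    have hvV : v ∉ V := fun h => hvD (Finset.mem_union_right _ h)
    -- Y = (insert u B).erase v.
    have hYeq : Y = (insert u B).erase v := by
      apply Finset.eq_of_subset_of_card_le
      · intro x hx
        refine Finset.mem_erase.mpr ⟨fun h => hvmem.2 (h ▸ hx), hYsub' hx⟩
      · rw [Finset.card_erase_of_mem hvmem.1]
        omega
    -- So v ∈ t u ⊆ V, contradiction.
    obtain ⟨us, hus, husval⟩ := Finset.mem_image.mp huS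
    have : v ∈ V := by
      refine Finset.mem_biUnion.mpr ⟨us, hus, ?_⟩
      refine Finset.mem_filter.mpr ⟨Finset.mem_sdiff.mpr ⟨hvB, hvA⟩, ?_⟩
      rw [husval, ← hYeq]
      exact hYi
    exact hvV this
  obtain ⟨f, hfinj, hft⟩ := (Finset.all_card_le_biUnion_card_iff_exists_injective t).mp hall
  have hmem : ∀ u : ↥(A \ B), f u ∈ B \ A := fun u => (Finset.mem_filter.mp (hft u)).1
  refine ⟨fun u => ⟨f u, hmem u⟩, ?_, fun u => (Finset.mem_filter.mp (hft u)).2⟩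
  have hginj : Function.Injective (fun u : ↥(A \ B) => (⟨f u, hmem u⟩ : ↥(B \ A))) := by
    intro x y hxy
    exact hfinj (congrArg Subtype.val hxy)
  rw [Fintype.bijective_iff_injective_and_card]
  refine ⟨hginj, ?_⟩
  rw [Fintype.card_coe, Fintype.card_coe]
  exact hsd
end

section
/- Let N be a finite set, let f : 2^N → ℝ be γ-weakly submodular for some γ ∈ (0, 1], and let O ⊆ N with |O| = k. For an integer 0 ≤ s < k, let A_s denote the average of f(S) over all subsets S ⊆ O with |S| = s. Then A_{s+1} ≥ (1 − γ/(k − s))·A_s + (γ/(k − s))·f(O). -/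
/-- For a `γ`-weakly submodular `f` and a set `O` of size `k`,
the averages `A_s` of `f` over the `s`-element subsets of `O` satisfy
`A_{s+1} ≥ (1 − γ/(k − s))·A_s + (γ/(k − s))·f(O)` for every `0 ≤ s < k`. -/
theorem average_step {α : Type*} [DecidableEq α] [Fintype α]
    (f : Finset α → ℝ) (γ : ℝ) (hγ : 0 < γ ∧ γ ≤ 1)
    (hws : ∀ A B : Finset α,
      γ * (f (A ∪ B) - f A) ≤ ∑ u ∈ B, (f (insert u A) - f A))
    (O : Finset α) (k : ℕ) (hk : O.card = k)
    (s : ℕ) (hs : s < k) :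
    (∑ S ∈ O.powersetCard (s + 1), f S) / ((O.powersetCard (s + 1)).card : ℝ) ≥
      (1 - γ / ((k : ℝ) - s)) *
          ((∑ S ∈ O.powersetCard s, f S) / ((O.powersetCard s).card : ℝ))
        + (γ / ((k : ℝ) - s)) * f O := by
  obtain ⟨hγ0, hγ1⟩ := hγ
  have hsk : s ≤ k := le_of_lt hs
  have hc0 : (O.powersetCard s).card = k.choose s := by
    rw [Finset.card_powersetCard, hk]
  have hc1 : (O.powersetCard (s+1)).card = k.choose (s+1) := by
    rw [Finset.card_powersetCard, hk]
  have hc0pos : (0:ℝ) < (k.choose s : ℝ) := by exact_mod_cast Nat.choose_pos hsk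
  have hc1pos : (0:ℝ) < (k.choose (s+1) : ℝ) := by exact_mod_cast Nat.choose_pos hs
  have hd : (0:ℝ) < (k:ℝ) - s := by
    have : (s:ℝ) < (k:ℝ) := by exact_mod_cast hs
    linarith
  -- the double-counting identity
  have hdouble : ∑ S ∈ O.powersetCard s, ∑ u ∈ O \ S, f (insert u S)
      = ((s:ℝ)+1) * ∑ T ∈ O.powersetCard (s+1), f T := by
    have h1 : ∑ S ∈ O.powersetCard s, ∑ u ∈ O \ S, f (insert u S)
        = ∑ T ∈ O.powersetCard (s+1), ∑ u ∈ T, f T := by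
      rw [Finset.sum_sigma' (O.powersetCard s) (fun S => O \ S) (fun S u => f (insert u S)),
        Finset.sum_sigma' (O.powersetCard (s+1)) (fun T => T) (fun T _ => f T)]
      refine Finset.sum_bij' (fun p _ => ⟨insert p.2 p.1, p.2⟩)
        (fun p _ => ⟨p.1.erase p.2, p.2⟩) ?_ ?_ ?_ ?_ ?_
      · rintro ⟨S, u⟩ hp
        rw [Finset.mem_sigma, Finset.mem_powersetCard] at hp ⊢
        obtain ⟨⟨hSO, hScard⟩, hu⟩ := hp
        rw [Finset.mem_sdiff] at hu
        refine ⟨⟨?_, ?_⟩, Finset.mem_insert_self _ _⟩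
        · exact Finset.insert_subset hu.1 hSO
        · rw [Finset.card_insert_of_notMem hu.2, hScard]
      · rintro ⟨T, u⟩ hp
        rw [Finset.mem_sigma, Finset.mem_powersetCard] at hp ⊢
        obtain ⟨⟨hTO, hTcard⟩, hu⟩ := hp
        constructor
        · constructor
          · exact (Finset.erase_subset _ _).trans hTO
          · rw [Finset.card_erase_of_mem hu, hTcard]
            omega
        · rw [Finset.mem_sdiff]
          exact ⟨hTO hu, Finset.notMem_erase _ _⟩
      · rintro ⟨S, u⟩ hp
        rw [Finset.mem_sigma, Finset.mem_powersetCard] at hp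
        obtain ⟨_, hu⟩ := hp
        rw [Finset.mem_sdiff] at hu
        simp [Finset.erase_insert hu.2]
      · rintro ⟨T, u⟩ hp
        rw [Finset.mem_sigma] at hp
        simp [Finset.insert_erase hp.2]
      · rintro ⟨S, u⟩ _
        rfl
    rw [h1]
    have h2 : ∀ T ∈ O.powersetCard (s+1), ∑ u ∈ T, f T = ((s:ℝ)+1) * f T := by
      intro T hT
      rw [Finset.mem_powersetCard] at hT
      rw [Finset.sum_const, hT.2, nsmul_eq_mul]
      push_cast
      ring
    rw [Finset.sum_congr rfl h2, ← Finset.mul_sum]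
  -- the key inequality from weak submodularity
  have key : γ * ((k.choose s : ℝ) * f O - ∑ S ∈ O.powersetCard s, f S)
      ≤ ((s:ℝ)+1) * (∑ T ∈ O.powersetCard (s+1), f T)
        - ((k:ℝ) - s) * ∑ S ∈ O.powersetCard s, f S := by
    have step : ∀ S ∈ O.powersetCard s,
        γ * (f O - f S) ≤ (∑ u ∈ O \ S, f (insert u S)) - ((k:ℝ)-s) * f S := by
      intro S hS
      rw [Finset.mem_powersetCard] at hS
      have hunion : S ∪ O \ S = O := Finset.union_sdiff_of_subset hS.1
      have hcard : (O \ S).card = k - s := by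
        rw [Finset.card_sdiff_of_subset hS.1, hk, hS.2]
      have h := hws S (O \ S)
      rw [hunion, Finset.sum_sub_distrib, Finset.sum_const, hcard, nsmul_eq_mul] at h
      have hcast : ((k - s : ℕ) : ℝ) = (k:ℝ) - s := by
        rw [Nat.cast_sub hsk]
      rw [hcast] at h
      exact h
    have total := Finset.sum_le_sum step
    have lhs_eq : ∑ S ∈ O.powersetCard s, γ * (f O - f S)
        = γ * ((k.choose s : ℝ) * f O - ∑ S ∈ O.powersetCard s, f S) := by
      rw [← Finset.mul_sum, Finset.sum_sub_distrib, Finset.sum_const, hc0, nsmul_eq_mul]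
    have rhs_eq : ∑ S ∈ O.powersetCard s,
          ((∑ u ∈ O \ S, f (insert u S)) - ((k:ℝ)-s) * f S)
        = ((s:ℝ)+1) * (∑ T ∈ O.powersetCard (s+1), f T)
          - ((k:ℝ) - s) * ∑ S ∈ O.powersetCard s, f S := by
      rw [Finset.sum_sub_distrib, hdouble, ← Finset.mul_sum]
    rw [lhs_eq, rhs_eq] at total
    exact total
  -- pure arithmetic from here
  rw [ge_iff_le, hc0, hc1]
  set sum0 := ∑ S ∈ O.powersetCard s, f S with hsum0
  set sum1 := ∑ S ∈ O.powersetCard (s+1), f S with hsum1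
  have hcc : ((k.choose (s+1) : ℝ)) * ((s:ℝ)+1) = (k.choose s : ℝ) * ((k:ℝ) - s) := by
    have h := Nat.choose_succ_right_eq k s
    have : ((k.choose (s+1) * (s+1) : ℕ) : ℝ) = ((k.choose s * (k - s) : ℕ) : ℝ) := by
      exact_mod_cast congrArg Nat.cast h
    push_cast [Nat.cast_sub hsk] at this
    linarith [this]
  have hS1 : sum1 / (k.choose (s+1) : ℝ)
      = (((s:ℝ)+1) * sum1) / ((k.choose s : ℝ) * ((k:ℝ) - s)) := by
    rw [← hcc, mul_comm ((k.choose (s+1) : ℝ)) (((s:ℝ)+1)),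
      mul_div_mul_left _ _ (by positivity : ((s:ℝ)+1) ≠ 0)]
  rw [hS1, ← sub_nonneg]
  have hexp : (((s:ℝ)+1) * sum1) / ((k.choose s : ℝ) * ((k:ℝ) - s))
        - ((1 - γ / ((k:ℝ) - s)) * (sum0 / (k.choose s : ℝ)) + γ / ((k:ℝ) - s) * f O)
      = ((((s:ℝ)+1) * sum1 - ((k:ℝ) - s) * sum0)
          - γ * ((k.choose s : ℝ) * f O - sum0)) / ((k.choose s : ℝ) * ((k:ℝ) - s)) := by
    field_simp
    ring
  rw [hexp]
  apply div_nonneg _ (by positivity)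
  linarith [key]
end

section
/- Let N be a finite set, let f : 2^N → ℝ be non-negative and γ-weakly submodular for some γ ∈ (0, 1], and let O ⊆ N with |O| = k. For an integer 0 ≤ i ≤ k, let A_{k−i} denote the average of f(S) over all subsets S ⊆ O with |S| = k − i. Then A_{k−i} ≥ (1 − exp(−γ·Σ_{j=i+1}^{k} 1/j))·f(O). -/
lemma dcount {α : Type*} [DecidableEq α] (O : Finset α) (s : ℕ) (g : Finset α → ℝ) :
    ∑ T ∈ O.powersetCard s, ∑ u ∈ O \ T, g (insert u T)
      = (s+1 : ℝ) * ∑ S ∈ O.powersetCard (s+1), g S := by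
  have h2 : ∀ S ∈ O.powersetCard (s+1), ∑ u ∈ S, g S = (s+1 : ℝ) * g S := by
    intro S hS
    rw [Finset.mem_powersetCard] at hS
    rw [Finset.sum_const, hS.2]
    ring
  rw [Finset.mul_sum, ← Finset.sum_congr rfl h2]
  rw [Finset.sum_sigma', Finset.sum_sigma']
  apply Finset.sum_bij' (fun p _ => (⟨insert p.2 p.1, p.2⟩ : Σ _ : Finset α, α))
      (fun p _ => (⟨p.1.erase p.2, p.2⟩ : Σ _ : Finset α, α))
  · rintro ⟨T, u⟩ hp
    simp only [Finset.mem_sigma, Finset.mem_powersetCard, Finset.mem_sdiff] at hp ⊢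
    refine ⟨⟨Finset.insert_subset hp.2.1 hp.1.1, ?_⟩, Finset.mem_insert_self _ _⟩
    rw [Finset.card_insert_of_notMem hp.2.2, hp.1.2]
  · rintro ⟨S, u⟩ hp
    simp only [Finset.mem_sigma, Finset.mem_powersetCard, Finset.mem_sdiff] at hp ⊢
    refine ⟨⟨(Finset.erase_subset _ _).trans hp.1.1, ?_⟩, hp.1.1 hp.2, Finset.notMem_erase _ _⟩
    rw [Finset.card_erase_of_mem hp.2, hp.1.2]; rfl
  · rintro ⟨T, u⟩ hp
    simp only [Finset.mem_sigma, Finset.mem_powersetCard, Finset.mem_sdiff] at hp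
    simp [Finset.erase_insert hp.2.2]
  · rintro ⟨S, u⟩ hp
    simp only [Finset.mem_sigma, Finset.mem_powersetCard, Finset.mem_sdiff] at hp
    simp [Finset.insert_erase hp.2]
  · rintro ⟨T, u⟩ hp
    simp

lemma keyrec {α : Type*} [DecidableEq α]
    (f : Finset α → ℝ) (γ : ℝ)
    (hws : ∀ A B : Finset α,
      γ * (f (A ∪ B) - f A) ≤ ∑ u ∈ B, (f (insert u A) - f A))
    (O : Finset α) (k : ℕ) (hk : O.card = k) (s : ℕ) (hs : s < k) :
    γ * ((k.choose s : ℝ) * f O - ∑ T ∈ O.powersetCard s, f T)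
      ≤ (s+1 : ℝ) * ∑ S ∈ O.powersetCard (s+1), f S
        - ((k:ℝ) - s) * ∑ T ∈ O.powersetCard s, f T := by
  have h1 : ∀ T ∈ O.powersetCard s,
      γ * (f O - f T) ≤ ∑ u ∈ O \ T, (f (insert u T) - f T) := by
    intro T hT
    rw [Finset.mem_powersetCard] at hT
    have := hws T (O \ T)
    rwa [Finset.union_sdiff_of_subset hT.1] at this
  have h2 := Finset.sum_le_sum h1
  have hcard : (O.powersetCard s).card = k.choose s := by
    rw [Finset.card_powersetCard, hk]
  have hsd : ∀ T ∈ O.powersetCard s, ∑ u ∈ O \ T, (f (insert u T) - f T)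
      = (∑ u ∈ O \ T, f (insert u T)) - ((k:ℝ) - s) * f T := by
    intro T hT
    rw [Finset.mem_powersetCard] at hT
    rw [Finset.sum_sub_distrib, Finset.sum_const, Finset.card_sdiff_of_subset hT.1, hk, hT.2]
    have : ((k - s : ℕ) : ℝ) = (k:ℝ) - s := by
      rw [Nat.cast_sub hs.le]
    rw [nsmul_eq_mul, this]
  rw [Finset.sum_congr rfl hsd, Finset.sum_sub_distrib, dcount] at h2
  calc γ * ((k.choose s : ℝ) * f O - ∑ T ∈ O.powersetCard s, f T)
      = ∑ T ∈ O.powersetCard s, γ * (f O - f T) := by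
        simp only [mul_sub, Finset.sum_sub_distrib, Finset.sum_const, hcard,
          nsmul_eq_mul, Finset.mul_sum]
        ring
    _ ≤ _ := by
        refine h2.trans_eq ?_
        simp only [Finset.mul_sum]

lemma key_ind {α : Type*} [DecidableEq α]
    (f : Finset α → ℝ) (hnn : ∀ S : Finset α, 0 ≤ f S)
    (γ : ℝ) (hγ : 0 < γ ∧ γ ≤ 1)
    (hws : ∀ A B : Finset α,
      γ * (f (A ∪ B) - f A) ≤ ∑ u ∈ B, (f (insert u A) - f A))
    (O : Finset α) (k : ℕ) (hk : O.card = k) :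
    ∀ s, s ≤ k →
    (k.choose s : ℝ) * (1 - ∏ j ∈ Finset.Icc (k - s + 1) k, (1 - γ / (j:ℝ))) * f O
      ≤ ∑ S ∈ O.powersetCard s, f S := by
  intro s
  induction s with
  | zero =>
    intro _
    have : Finset.Icc (k - 0 + 1) k = ∅ := by
      apply Finset.Icc_eq_empty; omega
    rw [this, Finset.prod_empty]
    simpa using hnn ∅
  | succ s ih =>
    intro hs1
    have hsk : s < k := hs1
    have ihs := ih hsk.le
    have hrec := keyrec f γ hws O k hk s hsk
    set c := ∏ j ∈ Finset.Icc (k - s + 1) k, (1 - γ / (j:ℝ)) with hc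
    set K : ℝ := (k:ℝ) - s with hK
    have hK1 : (1:ℝ) ≤ K := by
      rw [hK]
      have : (s:ℝ) + 1 ≤ (k:ℝ) := by exact_mod_cast hs1
      linarith
    have hKne : K ≠ 0 := by linarith
    have hprod : ∏ j ∈ Finset.Icc (k - (s+1) + 1) k, (1 - γ/(j:ℝ)) = (1 - γ/K) * c := by
      have h1 : k - (s+1) + 1 = k - s := by omega
      rw [h1, Finset.Icc_eq_cons_Ioc (Nat.sub_le k s), Finset.prod_cons, ← Finset.Icc_add_one_left_eq_Ioc]
      have h2 : ((k - s : ℕ) : ℝ) = K := by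
        rw [hK, Nat.cast_sub hsk.le]
      rw [h2, hc]
    have hchooseR : (k.choose (s+1) : ℝ) * ((s:ℝ)+1) = (k.choose s : ℝ) * K := by
      have := Nat.choose_succ_right_eq k s
      have h3 : ((k.choose (s+1) * (s+1) : ℕ) : ℝ) = ((k.choose s * (k - s) : ℕ) : ℝ) := by
        exact_mod_cast congrArg (Nat.cast (R := ℝ)) this
      push_cast [Nat.cast_sub hsk.le] at h3
      rw [hK]; linarith
    have hKγ : (1 - γ/K) * K = K - γ := by field_simp
    have hcoef : 0 ≤ K - γ := by linarith [hγ.2]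
    have hstep : (K - γ) * ((k.choose s : ℝ) * (1 - c) * f O) ≤ (K - γ) * ∑ T ∈ O.powersetCard s, f T :=
      mul_le_mul_of_nonneg_left ihs hcoef
    have hfinal : (k.choose (s+1) : ℝ) * (1 - (1 - γ/K) * c) * f O * ((s:ℝ)+1)
        ≤ (∑ S ∈ O.powersetCard (s+1), f S) * ((s:ℝ)+1) := by
      have heq : (k.choose (s+1) : ℝ) * (1 - (1 - γ/K) * c) * f O * ((s:ℝ)+1)
          = γ * ((k.choose s : ℝ) * f O) + (K - γ) * ((k.choose s : ℝ) * (1 - c) * f O) := by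
        linear_combination ((1 - (1 - γ/K)*c) * f O) * hchooseR - (c * (k.choose s : ℝ) * f O) * hKγ
      rw [heq]
      have h4 : ((s:ℝ)+1) * ∑ S ∈ O.powersetCard (s+1), f S
          = (∑ S ∈ O.powersetCard (s+1), f S) * ((s:ℝ)+1) := by ring
      nlinarith [hrec, hstep]
    have hpos : (0:ℝ) < (s:ℝ)+1 := by positivity
    rw [hprod]
    exact le_of_mul_le_mul_right hfinal hpos


/-- For a non-negative `γ`-weakly submodular `f` and a set `O` of size `k`,
the average `A_{k−i}` of `f` over the `(k−i)`-element subsets of `O` satisfies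
`A_{k−i} ≥ (1 − exp(−γ·Σ_{j=i+1}^{k} 1/j))·f(O)` for every `0 ≤ i ≤ k`. -/
theorem average_lower_bound_exp {α : Type*} [DecidableEq α] [Fintype α]
    (f : Finset α → ℝ) (hnn : ∀ S : Finset α, 0 ≤ f S)
    (γ : ℝ) (hγ : 0 < γ ∧ γ ≤ 1)
    (hws : ∀ A B : Finset α,
      γ * (f (A ∪ B) - f A) ≤ ∑ u ∈ B, (f (insert u A) - f A))
    (O : Finset α) (k : ℕ) (hk : O.card = k)
    (i : ℕ) (hi : i ≤ k) :
    (∑ S ∈ O.powersetCard (k - i), f S) / ((O.powersetCard (k - i)).card : ℝ) ≥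
      (1 - Real.exp (-γ * ∑ j ∈ Finset.Icc (i + 1) k, (1 : ℝ) / (j : ℝ))) * f O := by
  have hC : (O.powersetCard (k-i)).card = k.choose (k-i) := by
    rw [Finset.card_powersetCard, hk]
  have hCpos : 0 < k.choose (k-i) := Nat.choose_pos (Nat.sub_le k i)
  have hCR : (0:ℝ) < (k.choose (k-i):ℝ) := by exact_mod_cast hCpos
  have hkey := key_ind f hnn γ hγ hws O k hk (k-i) (Nat.sub_le k i)
  have hidx : k - (k - i) + 1 = i + 1 := by omega
  rw [hidx] at hkey
  have hprodle : ∏ j ∈ Finset.Icc (i+1) k, (1 - γ/(j:ℝ))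
      ≤ Real.exp (-γ * ∑ j ∈ Finset.Icc (i+1) k, (1:ℝ)/(j:ℝ)) := by
    have h1 : -γ * ∑ j ∈ Finset.Icc (i+1) k, (1:ℝ)/(j:ℝ)
        = ∑ j ∈ Finset.Icc (i+1) k, (-γ/(j:ℝ)) := by
      rw [Finset.mul_sum]
      exact Finset.sum_congr rfl (fun j _ => by ring)
    rw [h1, Real.exp_sum]
    apply Finset.prod_le_prod
    · intro j hj
      have hj1 : 1 ≤ j := by rw [Finset.mem_Icc] at hj; omega
      have hjR : (1:ℝ) ≤ (j:ℝ) := by exact_mod_cast hj1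
      have : γ / (j:ℝ) ≤ 1 := by
        rw [div_le_one (by linarith)]
        linarith [hγ.2]
      linarith
    · intro j hj
      have := Real.add_one_le_exp (-γ/(j:ℝ))
      simp only [neg_div] at this ⊢
      linarith
  have h2 : (1 - Real.exp (-γ * ∑ j ∈ Finset.Icc (i+1) k, (1:ℝ)/(j:ℝ))) * f O
      ≤ (1 - ∏ j ∈ Finset.Icc (i+1) k, (1 - γ/(j:ℝ))) * f O :=
    mul_le_mul_of_nonneg_right (by linarith) (hnn O)
  rw [ge_iff_le, hC, le_div_iff₀ hCR]
  calc (1 - Real.exp (-γ * ∑ j ∈ Finset.Icc (i+1) k, (1:ℝ)/(j:ℝ))) * f O * (k.choose (k-i):ℝ)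
      ≤ (1 - ∏ j ∈ Finset.Icc (i+1) k, (1 - γ/(j:ℝ))) * f O * (k.choose (k-i):ℝ) :=
        mul_le_mul_of_nonneg_right h2 hCR.le
    _ = (k.choose (k-i):ℝ) * (1 - ∏ j ∈ Finset.Icc (i+1) k, (1 - γ/(j:ℝ))) * f O := by ring
    _ ≤ _ := hkey
end

section
/- Let N be a finite set, let f : 2^N → ℝ be non-negative and γ-weakly submodular for some γ ∈ (0, 1], and let O ⊆ N with |O| = k. For an integer 0 ≤ i ≤ k, let A_{k−i} denote the average of f(S) over all subsets S ⊆ O with |S| = k − i. Then A_{k−i} ≥ (1 − ((i + 1)/(k + 1))^γ)·f(O). -/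
/-!
Write `A m` for the average of `f` over the `m`-subsets of `O`, `k = |O|`. Applying weak
submodularity to each `m`-subset `A` and `B = O`, and double counting the pairs `(A, u)` with
`u ∈ O \ A`, gives `γ (f O - A m) ≤ (k - m) (A (m+1) - A m)`. So the gap `f O - A m` shrinks by
a factor `1 - γ / (k - m)` at each step, and `1 - γ / j ≤ (j / (j + 1)) ^ γ` telescopes these
factors into `((k - m + 1) / (k + 1)) ^ γ`, starting from `f O - f ∅ ≤ f O`.
-/

open Finset Real

lemma one_sub_div_le_div_add_one_rpow {γ j : ℝ} (hγ : 0 ≤ γ) (hj : 0 < j) :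
    1 - γ / j ≤ (j / (j + 1)) ^ γ := by
  have hlog : -(1 / j) ≤ log (j / (j + 1)) := by
    have h := one_sub_inv_le_log_of_pos (show 0 < j / (j + 1) by positivity)
    rwa [inv_div, show 1 - (j + 1) / j = -(1 / j) by field_simp; ring] at h
  calc 1 - γ / j = γ * -(1 / j) + 1 := by ring
    _ ≤ γ * log (j / (j + 1)) + 1 := by gcongr
    _ ≤ exp (γ * log (j / (j + 1))) := add_one_le_exp _
    _ = (j / (j + 1)) ^ γ := by rw [rpow_def_of_pos (by positivity), mul_comm]

lemma sub_le_rpow_mul_of_gap_contraction {a : ℕ → ℝ} {c γ : ℝ} {k : ℕ}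
    (hγ0 : 0 ≤ γ) (hγ1 : γ ≤ 1) (hc : 0 ≤ c) (ha0 : 0 ≤ a 0)
    (hstep : ∀ m < k, γ * (c - a m) ≤ (k - m) * (a (m + 1) - a m)) :
    ∀ m ≤ k, c - a m ≤ (((k : ℝ) - m + 1) / (k + 1)) ^ γ * c := by
  intro m
  induction m with
  | zero =>
    intro _
    rw [Nat.cast_zero, sub_zero, div_self (by positivity), one_rpow, one_mul]
    linarith
  | succ m ih =>
    intro hm
    set j : ℝ := k - m with hj_def
    have hj : 1 ≤ j := by
      rw [hj_def, le_sub_iff_add_le, add_comm]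
      exact_mod_cast hm
    have hgap : j * (c - a (m + 1)) ≤ (j - γ) * (c - a m) := by
      linear_combination hstep m hm
    have hsplit : (j / (j + 1)) ^ γ * ((j + 1) / (k + 1)) ^ γ = (j / (k + 1)) ^ γ := by
      rw [← mul_rpow (by positivity) (by positivity)]
      congr 1
      field_simp
    have hcontract : j * (c - a (m + 1)) ≤ j * ((j / (k + 1)) ^ γ * c) :=
      calc j * (c - a (m + 1)) ≤ (j - γ) * (c - a m) := hgap
        _ ≤ (j - γ) * (((j + 1) / (k + 1)) ^ γ * c) := by
          gcongr
          · linarith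
          · exact ih (by omega)
        _ = j * ((1 - γ / j) * ((j + 1) / (k + 1)) ^ γ * c) := by field_simp
        _ ≤ j * ((j / (j + 1)) ^ γ * ((j + 1) / (k + 1)) ^ γ * c) := by
          gcongr
          exact one_sub_div_le_div_add_one_rpow hγ0 (by linarith)
        _ = j * ((j / (k + 1)) ^ γ * c) := by rw [hsplit]
    have hcast : (k : ℝ) - ↑(m + 1) + 1 = j := by push_cast; ring
    rw [hcast]
    exact le_of_mul_le_mul_left hcontract (by linarith)

namespace Finset

variable {α : Type*} [DecidableEq α]

lemma sum_powersetCard_sum_sdiff_insert {M : Type*} [AddCommMonoid M]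
    (O : Finset α) (s : ℕ) (g : Finset α → M) :
    ∑ A ∈ O.powersetCard s, ∑ u ∈ O \ A, g (insert u A) =
      (s + 1) • ∑ B ∈ O.powersetCard (s + 1), g B := by
  have hcount : (s + 1) • ∑ B ∈ O.powersetCard (s + 1), g B =
      ∑ B ∈ O.powersetCard (s + 1), ∑ _u ∈ B, g B := by
    rw [smul_sum]
    refine sum_congr rfl fun B hB => ?_
    rw [sum_const, (mem_powersetCard.mp hB).2]
  rw [hcount, sum_sigma', sum_sigma']
  refine sum_nbij' (fun p => ⟨insert p.2 p.1, p.2⟩) (fun p => ⟨p.1.erase p.2, p.2⟩)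
    ?_ ?_ ?_ ?_ (fun _ _ => rfl)
  · rintro ⟨A, u⟩ hp
    simp only [mem_sigma, mem_powersetCard, mem_sdiff] at hp ⊢
    obtain ⟨⟨hAO, hAs⟩, huO, huA⟩ := hp
    exact ⟨⟨insert_subset huO hAO, by rw [card_insert_of_notMem huA, hAs]⟩,
      mem_insert_self _ _⟩
  · rintro ⟨B, u⟩ hp
    simp only [mem_sigma, mem_powersetCard, mem_sdiff] at hp ⊢
    obtain ⟨⟨hBO, hBs⟩, huB⟩ := hp
    exact ⟨⟨(erase_subset _ _).trans hBO, by rw [card_erase_of_mem huB, hBs]; rfl⟩,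
      hBO huB, notMem_erase _ _⟩
  · rintro ⟨A, u⟩ hp
    simp only [mem_sigma, mem_sdiff] at hp
    simp [erase_insert hp.2.2]
  · rintro ⟨B, u⟩ hp
    simp only [mem_sigma] at hp
    simp [insert_erase hp.2]

lemma sum_powersetCard_sum_marginal (f : Finset α → ℝ) (O : Finset α) (m : ℕ) :
    ∑ A ∈ O.powersetCard m, ∑ u ∈ O, (f (insert u A) - f A) =
      (m + 1) * ∑ B ∈ O.powersetCard (m + 1), f B -
        (O.card - m) * ∑ A ∈ O.powersetCard m, f A := by
  have hA : ∀ A ∈ O.powersetCard m, ∑ u ∈ O, (f (insert u A) - f A) =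
      ∑ u ∈ O \ A, f (insert u A) - (O.card - m) * f A := by
    intro A hA
    obtain ⟨hAO, hAm⟩ := mem_powersetCard.mp hA
    have hvanish : ∀ u ∈ O, u ∉ O \ A → f (insert u A) - f A = 0 := fun u hu hu' => by
      rw [insert_eq_of_mem (by simpa [hu] using hu'), sub_self]
    rw [← sum_subset sdiff_subset hvanish, sum_sub_distrib, sum_const, card_sdiff_of_subset hAO,
      hAm, nsmul_eq_mul, Nat.cast_sub (hAm ▸ card_le_card hAO)]
  rw [sum_congr rfl hA, sum_sub_distrib, ← mul_sum, sum_powersetCard_sum_sdiff_insert,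
    nsmul_eq_mul]
  push_cast
  ring

end Finset

lemma succ_mul_choose_succ_eq (k m : ℕ) (hm : m ≤ k) :
    ((m : ℝ) + 1) * k.choose (m + 1) = ((k : ℝ) - m) * k.choose m := by
  rw [← Nat.cast_sub hm]
  exact_mod_cast (mul_comm _ _).trans ((Nat.choose_succ_right_eq k m).trans (mul_comm _ _))

noncomputable def powersetCardAverage {α : Type*} (f : Finset α → ℝ) (O : Finset α) (s : ℕ) :
    ℝ :=
  (∑ S ∈ O.powersetCard s, f S) / (O.powersetCard s).card

lemma sum_powersetCard_eq_choose_mul_average {α : Type*} (f : Finset α → ℝ) (O : Finset α)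
    (s : ℕ) :
    ∑ S ∈ O.powersetCard s, f S = (O.card.choose s : ℝ) * powersetCardAverage f O s := by
  rw [powersetCardAverage, ← card_powersetCard]
  by_cases h : (O.powersetCard s).card = 0
  · rw [card_eq_zero.mp h, sum_empty, card_empty, Nat.cast_zero, zero_mul]
  · field_simp

lemma gamma_mul_sub_powersetCardAverage_le {α : Type*} [DecidableEq α] {f : Finset α → ℝ}
    {γ : ℝ}
    (hws : ∀ A B : Finset α, γ * (f (A ∪ B) - f A) ≤ ∑ u ∈ B, (f (insert u A) - f A))
    (O : Finset α) {m : ℕ} (hm : m ≤ O.card) :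
    γ * (f O - powersetCardAverage f O m) ≤
      (O.card - m) * (powersetCardAverage f O (m + 1) - powersetCardAverage f O m) := by
  set k := O.card
  have hsum : γ * (k.choose m * f O - ∑ A ∈ O.powersetCard m, f A) ≤
      ∑ A ∈ O.powersetCard m, ∑ u ∈ O, (f (insert u A) - f A) := by
    calc γ * (k.choose m * f O - ∑ A ∈ O.powersetCard m, f A)
        = ∑ A ∈ O.powersetCard m, γ * (f O - f A) := by
          rw [← mul_sum, sum_sub_distrib, sum_const, card_powersetCard, nsmul_eq_mul]
      _ = ∑ A ∈ O.powersetCard m, γ * (f (A ∪ O) - f A) :=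
          sum_congr rfl fun A hA => by rw [union_eq_right.mpr (mem_powersetCard.mp hA).1]
      _ ≤ _ := sum_le_sum fun A _ => hws A O
  rw [sum_powersetCard_sum_marginal, sum_powersetCard_eq_choose_mul_average,
    sum_powersetCard_eq_choose_mul_average, ← mul_assoc, succ_mul_choose_succ_eq k m hm] at hsum
  have hpos : (0 : ℝ) < k.choose m := by exact_mod_cast Nat.choose_pos hm
  refine le_of_mul_le_mul_left ?_ hpos
  linear_combination hsum

theorem average_lower_bound_rpow_general {α : Type*} [DecidableEq α]
    (f : Finset α → ℝ) (hnn : ∀ S : Finset α, 0 ≤ f S)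
    (γ : ℝ) (hγ : 0 < γ ∧ γ ≤ 1)
    (hws : ∀ A B : Finset α,
      γ * (f (A ∪ B) - f A) ≤ ∑ u ∈ B, (f (insert u A) - f A))
    (O : Finset α) (k : ℕ) (hk : O.card = k)
    (i : ℕ) (hi : i ≤ k) :
    (∑ S ∈ O.powersetCard (k - i), f S) / ((O.powersetCard (k - i)).card : ℝ) ≥
      (1 - (((i : ℝ) + 1) / ((k : ℝ) + 1)) ^ γ) * f O := by
  subst hk
  have hA0 : 0 ≤ powersetCardAverage f O 0 :=
    div_nonneg (sum_nonneg fun S _ => hnn S) (Nat.cast_nonneg _)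
  have hgap := sub_le_rpow_mul_of_gap_contraction hγ.1.le hγ.2 (hnn O) hA0
    (fun m hm => gamma_mul_sub_powersetCardAverage_le hws O hm.le) (O.card - i) (Nat.sub_le _ _)
  rw [Nat.cast_sub hi, sub_sub_cancel] at hgap
  change powersetCardAverage f O (O.card - i) ≥ _
  linarith

/-- For a non-negative `γ`-weakly submodular `f` and a set `O` of size `k`,
the average `A_{k−i}` of `f` over the `(k−i)`-element subsets of `O` satisfies
`A_{k−i} ≥ (1 − ((i+1)/(k+1))^γ)·f(O)` for every `0 ≤ i ≤ k`. -/
theorem average_lower_bound_rpow {α : Type*} [DecidableEq α] [Fintype α]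
    (f : Finset α → ℝ) (hnn : ∀ S : Finset α, 0 ≤ f S)
    (γ : ℝ) (hγ : 0 < γ ∧ γ ≤ 1)
    (hws : ∀ A B : Finset α,
      γ * (f (A ∪ B) - f A) ≤ ∑ u ∈ B, (f (insert u A) - f A))
    (O : Finset α) (k : ℕ) (hk : O.card = k)
    (i : ℕ) (hi : i ≤ k) :
    (∑ S ∈ O.powersetCard (k - i), f S) / ((O.powersetCard (k - i)).card : ℝ) ≥
      (1 - (((i : ℝ) + 1) / ((k : ℝ) + 1)) ^ γ) * f O :=
  average_lower_bound_rpow_general f hnn γ hγ hws O k hk i hi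
end

section
/- Let γ ∈ (0, 1], let k ≥ 1 be an integer, let F ≥ 0 be a real number, and let a_0, a_1, …, a_k be real numbers such that a_0 ≥ 0, a_{i−1} ≤ a_i for every 1 ≤ i ≤ k, and a_i ≥ a_{i−1} + γ·((1 − (i/(k + 1))^γ)·F − a_{i−1})/(k − i + 1) for every 1 ≤ i ≤ k. Then for every 0 ≤ i ≤ k, a_i ≥ (γ/k)·(Σ_{j=1}^{i} (1 − (j/(k + 1))^γ)·F − i·a_k). -/
/-- The abstract inductive inequality from the analysis of Residual Random
Greedy: if `a_0 ≥ 0`, the sequence is monotone, and each step satisfies the per-round gain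
guarantee, then `a_i ≥ (γ/k)·(Σ_{j=1}^{i} (1 − (j/(k+1))^γ)·F − i·a_k)` for all `0 ≤ i ≤ k`. -/
theorem rrg_induction (γ : ℝ) (hγ : 0 < γ ∧ γ ≤ 1) (k : ℕ) (hk : 1 ≤ k)
    (F : ℝ) (hF : 0 ≤ F) (a : ℕ → ℝ) (ha0 : 0 ≤ a 0)
    (hmono : ∀ i : ℕ, 1 ≤ i → i ≤ k → a (i - 1) ≤ a i)
    (hrec : ∀ i : ℕ, 1 ≤ i → i ≤ k →
      a i ≥ a (i - 1) +
        γ * ((1 - ((i : ℝ) / ((k : ℝ) + 1)) ^ γ) * F - a (i - 1)) / ((k : ℝ) - (i : ℝ) + 1)) :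
    ∀ i : ℕ, i ≤ k →
      a i ≥ (γ / (k : ℝ)) *
        ((∑ j ∈ Finset.Icc 1 i, (1 - ((j : ℝ) / ((k : ℝ) + 1)) ^ γ) * F) - (i : ℝ) * a k) := by
  obtain ⟨hγ0, hγ1⟩ := hγ
  have hkpos : (0:ℝ) < k := by exact_mod_cast hk
  -- monotone chain
  have hchain : ∀ j m : ℕ, j ≤ m → m ≤ k → a j ≤ a m := by
    intro j m
    induction m with
    | zero => intro hjm _; have : j = 0 := Nat.le_zero.mp hjm; simp [this]
    | succ n ih =>
      intro hjm hmk
      rcases Nat.lt_or_ge j (n+1) with h | h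
      · have h1 : a j ≤ a n := ih (by omega) (by omega)
        have h2 : a n ≤ a (n+1) := by
          have := hmono (n+1) (by omega) hmk
          simpa using this
        linarith
      · have : j = n+1 := by omega
        simp [this]
  have hak0 : 0 ≤ a k := le_trans ha0 (hchain 0 k (Nat.zero_le k) le_rfl)
  intro i
  induction i with
  | zero => intro _; simp [ha0]
  | succ n ih =>
    intro hle
    have hnk : n < k := hle
    have IH := ih (Nat.le_of_succ_le hle)
    set t : ℝ := (1 - ((↑(n+1) : ℝ) / ((k:ℝ) + 1)) ^ γ) * F with ht_def
    set S : ℝ := ∑ j ∈ Finset.Icc 1 n, (1 - ((j : ℝ) / ((k : ℝ) + 1)) ^ γ) * F with hS_def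
    have hsum : (∑ j ∈ Finset.Icc 1 (n+1), (1 - ((j : ℝ) / ((k : ℝ) + 1)) ^ γ) * F) = S + t := by
      rw [Finset.sum_Icc_succ_top (by omega : 1 ≤ n+1)]
    rw [hsum]
    -- t ≥ 0
    have hx0 : (0:ℝ) ≤ (↑(n+1) : ℝ) / ((k:ℝ) + 1) := by positivity
    have hx1 : (↑(n+1) : ℝ) / ((k:ℝ) + 1) ≤ 1 := by
      rw [div_le_one (by linarith)]
      push_cast; push_cast at hnk ⊢
      have : (n:ℝ) + 1 ≤ (k:ℝ) := by exact_mod_cast hle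
      linarith
    have ht0 : 0 ≤ t := by
      apply mul_nonneg _ hF
      have := Real.rpow_le_one hx0 hx1 (le_of_lt hγ0)
      linarith
    -- the recursion at n+1
    have hrec' := hrec (n+1) (by omega) hle
    have hcast : ((k:ℝ) - (↑(n+1):ℝ) + 1) = (k:ℝ) - n := by push_cast; ring
    rw [hcast] at hrec'
    have hden : (0:ℝ) < (k:ℝ) - n := by
      have : (n:ℝ) + 1 ≤ (k:ℝ) := by exact_mod_cast hle
      linarith
    have hsimp : (↑(n+1) - 1 : ℕ) = n := by omega
    rw [hsimp] at hrec'
    set c : ℝ := γ / ((k:ℝ) - n) with hc_def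
    have hrec'' : a (n+1) ≥ a n + c * (t - a n) := by
      have : γ * (t - a n) / ((k:ℝ) - n) = c * (t - a n) := by
        rw [hc_def]; ring
      linarith [hrec', this.symm.le]
    have hc_lb : γ / (k:ℝ) ≤ c := by
      rw [hc_def]
      apply div_le_div_of_nonneg_left (le_of_lt hγ0) hden
      have : (0:ℝ) ≤ (n:ℝ) := Nat.cast_nonneg n
      linarith
    have hc1 : c ≤ 1 := by
      rw [hc_def, div_le_one hden]
      have : (1:ℝ) ≤ (k:ℝ) - n := by
        have : (n:ℝ) + 1 ≤ (k:ℝ) := by exact_mod_cast hle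
        linarith
      linarith
    have hc0 : 0 ≤ c := le_trans (by positivity) hc_lb
    have hgk0 : 0 ≤ γ / (k:ℝ) := by positivity
    have hank : a n ≤ a k := hchain n k (le_of_lt hnk) le_rfl
    have hmono' : a n ≤ a (n+1) := by
      have := hmono (n+1) (by omega) hle
      simpa using this
    set B : ℝ := γ / (k:ℝ) * (S - (n:ℝ) * a k) with hB_def
    have hBan : B ≤ a n := IH
    have goal_eq : γ / (k:ℝ) * (S + t - (↑(n+1):ℝ) * a k) = B + γ / (k:ℝ) * (t - a k) := by
      rw [hB_def]; push_cast; ring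
    rw [goal_eq]
    rcases le_or_gt t (a k) with hcase | hcase
    · -- a (n+1) ≥ a n ≥ B ≥ B + (γ/k)(t - a k)
      have h1 : γ / (k:ℝ) * (t - a k) ≤ 0 := mul_nonpos_of_nonneg_of_nonpos hgk0 (by linarith)
      linarith
    · -- a (n+1) ≥ (1-c) a n + c t ≥ (1-c) B + c t = B + c (t - B) ≥ B + c (t - a k) ≥ B + (γ/k)(t - a k)
      have hBak : B ≤ a k := le_trans hBan hank
      have h1 : (1 - c) * B ≤ (1 - c) * a n := mul_le_mul_of_nonneg_left hBan (by linarith)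
      have h2 : c * (t - a k) ≤ c * (t - B) := mul_le_mul_of_nonneg_left (by linarith) hc0
      have h3 : γ / (k:ℝ) * (t - a k) ≤ c * (t - a k) :=
        mul_le_mul_of_nonneg_right hc_lb (by linarith) |>.trans_eq rfl
      nlinarith [hrec'']
end

section
/- For every real γ ∈ (0, 1] and integer k ≥ 1, (γ/((1 + γ)·k))·Σ_{j=1}^{k} (1 − (j/(k + 1))^γ) ≥ (γ/(1 + γ))² − 1/k. -/
open Real

/-- Key step: `(1+γ) x^γ ≤ (x+1)^{1+γ} - x^{1+γ}` for `x ≥ 1`, `0 < γ`. -/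
lemma step_bound (γ : ℝ) (hγ : 0 < γ) (x : ℝ) (hx : 1 ≤ x) :
    (1 + γ) * x ^ γ ≤ (x + 1) ^ (1 + γ) - x ^ (1 + γ) := by
  have hx0 : 0 < x := lt_of_lt_of_le one_pos hx
  have hs : (-1 : ℝ) ≤ 1 / x := le_trans (by norm_num : (-1:ℝ) ≤ 0) (by positivity)
  have hp : (1 : ℝ) ≤ 1 + γ := by linarith
  have hb := one_add_mul_self_le_rpow_one_add hs hp
  have hmul : x ^ (1 + γ) * (1 + 1 / x) ^ (1 + γ) = (x + 1) ^ (1 + γ) := by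
    rw [← Real.mul_rpow (le_of_lt hx0) (by positivity)]
    congr 1
    field_simp
  have h1 : x ^ (1 + γ) * (1 + (1 + γ) * (1 / x)) ≤ (x + 1) ^ (1 + γ) := by
    rw [← hmul]
    exact mul_le_mul_of_nonneg_left hb (by positivity)
  have h2 : x ^ (1 + γ) * (1 / x) = x ^ γ := by
    rw [Real.rpow_one_add' (le_of_lt hx0) (by positivity : (1:ℝ) + γ ≠ 0)]
    field_simp
  nlinarith [h1, h2]

/-- For every real `γ ∈ (0, 1]` and integer `k ≥ 1`,
`(γ/((1+γ)·k))·Σ_{j=1}^{k} (1 − (j/(k+1))^γ) ≥ (γ/(1+γ))² − 1/k`. -/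
theorem weighted_sum_bound (γ : ℝ) (hγ : 0 < γ ∧ γ ≤ 1) (k : ℕ) (hk : 1 ≤ k) :
    (γ / ((1 + γ) * (k : ℝ))) *
        (∑ j ∈ Finset.Icc 1 k, (1 - ((j : ℝ) / ((k : ℝ) + 1)) ^ γ)) ≥
      (γ / (1 + γ)) ^ 2 - 1 / (k : ℝ) := by
  obtain ⟨hγ0, hγ1⟩ := hγ
  have hk0 : (0 : ℝ) < k := by exact_mod_cast hk
  have hk1 : (0 : ℝ) < (k : ℝ) + 1 := by linarith
  have hγp : (0 : ℝ) < 1 + γ := by linarith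
  -- telescoping bound on sum of j^γ
  have hsum : ∑ j ∈ Finset.Icc 1 k, (1 + γ) * (j : ℝ) ^ γ ≤ ((k : ℝ) + 1) ^ (1 + γ) - 1 := by
    have htel : ∑ j ∈ Finset.Icc 1 k,
        (((j : ℝ) + 1) ^ (1 + γ) - (j : ℝ) ^ (1 + γ)) = ((k : ℝ) + 1) ^ (1 + γ) - 1 := by
      clear hk0 hk1
      induction k with
      | zero => simp at hk
      | succ n ih =>
        rcases Nat.eq_or_lt_of_le hk with h | h
        · simp [← h]
        · have hn : 1 ≤ n := Nat.lt_succ_iff.mp h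
          rw [Finset.sum_Icc_succ_top (by omega : 1 ≤ n + 1), ih hn]
          push_cast
          ring
    calc ∑ j ∈ Finset.Icc 1 k, (1 + γ) * (j : ℝ) ^ γ
        ≤ ∑ j ∈ Finset.Icc 1 k, (((j : ℝ) + 1) ^ (1 + γ) - (j : ℝ) ^ (1 + γ)) := by
          apply Finset.sum_le_sum
          intro j hj
          have hj1 : 1 ≤ (j : ℝ) := by
            exact_mod_cast (Finset.mem_Icc.mp hj).1
          exact step_bound γ hγ0 _ hj1
      _ = ((k : ℝ) + 1) ^ (1 + γ) - 1 := htel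
  -- bound sum of (j/(k+1))^γ
  have hSle : ∑ j ∈ Finset.Icc 1 k, ((j : ℝ) / ((k : ℝ) + 1)) ^ γ ≤ ((k : ℝ) + 1) / (1 + γ) := by
    have hrw : ∀ j ∈ Finset.Icc 1 k,
        ((j : ℝ) / ((k : ℝ) + 1)) ^ γ = (j : ℝ) ^ γ / ((k : ℝ) + 1) ^ γ := by
      intro j hj
      have hj0 : (0 : ℝ) ≤ j := Nat.cast_nonneg j
      exact Real.div_rpow hj0 (le_of_lt hk1) γ
    rw [Finset.sum_congr rfl hrw, ← Finset.sum_div]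
    rw [div_le_div_iff₀ (Real.rpow_pos_of_pos hk1 γ) hγp]
    have hmul : (∑ j ∈ Finset.Icc 1 k, (j : ℝ) ^ γ) * (1 + γ)
        = ∑ j ∈ Finset.Icc 1 k, (1 + γ) * (j : ℝ) ^ γ := by
      rw [Finset.sum_mul]; congr 1; ext j; ring
    have hpow : ((k : ℝ) + 1) ^ (1 + γ) = ((k : ℝ) + 1) * ((k : ℝ) + 1) ^ γ := by
      rw [Real.rpow_one_add' (le_of_lt hk1) (by positivity)]
    linarith [hsum, hmul, hpow]
  -- lower bound for the sum of (1 - ...)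
  have hS : ∑ j ∈ Finset.Icc 1 k, (1 - ((j : ℝ) / ((k : ℝ) + 1)) ^ γ)
      ≥ (k : ℝ) - ((k : ℝ) + 1) / (1 + γ) := by
    rw [Finset.sum_sub_distrib, Finset.sum_const, Nat.card_Icc]
    simp only [Nat.add_sub_cancel, nsmul_eq_mul, mul_one]
    linarith [hSle]
  -- combine
  have hc : 0 < γ / ((1 + γ) * (k : ℝ)) := by positivity
  have h1 : γ / ((1 + γ) * (k : ℝ)) *
      (∑ j ∈ Finset.Icc 1 k, (1 - ((j : ℝ) / ((k : ℝ) + 1)) ^ γ))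
      ≥ γ / ((1 + γ) * (k : ℝ)) * ((k : ℝ) - ((k : ℝ) + 1) / (1 + γ)) :=
    mul_le_mul_of_nonneg_left hS (le_of_lt hc)
  refine le_trans ?_ h1
  have heq : γ / ((1 + γ) * (k : ℝ)) * ((k : ℝ) - ((k : ℝ) + 1) / (1 + γ))
      = (γ / (1 + γ)) ^ 2 - γ / ((1 + γ) ^ 2 * (k : ℝ)) := by
    field_simp
    ring
  rw [heq]
  have : γ / ((1 + γ) ^ 2 * (k : ℝ)) ≤ 1 / (k : ℝ) := by
    rw [div_le_div_iff₀ (by positivity) hk0]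
    nlinarith [mul_nonneg (le_of_lt hk0) (sq_nonneg γ), mul_pos hγ0 hk0, hk0]
  linarith
end
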